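/- arXiv:1203.4216 — 2 statements merged into one kernel-verified Lean document; each statement's English description precedes it below -/
import Mathlib

section
/- For 0 < ε < 1/2 with ε = 1/N, σ > 0, and x ∈ X_N = {0, 1/N, …, (N−1)/N}, the variance of the log-correlated field satisfies E[X_x²] = σ²(log N + 1 − log 2), and for x ≠ x' ∈ X_N, E[X_x X_{x'}] = σ²(log(1/‖x−x'‖) − log 2), where ‖x−x'‖ = min{|x−x'|, 1−|x−x'|}. -/
/-!
A horizontal slice at height `y ≥ ε` of `A_ε(x) ∩ A_ε(x')` is the intersection of two arcs of
half-width `f(y)/2` on the unit circle centred at `x` and `x'`; as `f(y)/2 ≤ 1/4` it has length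
`(f(y) - ‖x - x'‖)⁺`. With `d = ‖x - x'‖` and `m = max ε d`, the `θ`-measure is therefore
`∫_m^{1/2} (y - d) y⁻² dy + ∫_{1/2}^∞ (1/2 - d) y⁻² dy = 1 - d/m - log (2m)`,
which gives `log N + 1 - log 2` on the diagonal (`d = 0`, `m = 1/N`) and `log (1/d) - log 2` off it
(`m = d ≥ 1/N`).
-/

open MeasureTheory ProbabilityTheory

/-- Distance on the circle `[0,1]_∼`. -/
noncomputable def circDist (x y : ℝ) : ℝ := min |x - y| (1 - |x - y|)

/-- The width profile `f(y) = y` for `y < 1/2` and `f(y) = 1/2` otherwise. -/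
noncomputable def coneF (y : ℝ) : ℝ := if y < 1 / 2 then y else 1 / 2

/-- The cone-like subset `A_u(x)` of the half-cylinder `[0,1]_∼ × (0,∞)`. -/
def coneSet (u x : ℝ) : Set (ℝ × ℝ) :=
  {p | p.1 ∈ Set.Ico (0 : ℝ) 1 ∧ u ≤ p.2 ∧ circDist p.1 x ≤ coneF p.2 / 2}

open Set Filter Metric Topology
open scoped ENNReal

lemma UnitAddCircle.norm_coe_of_abs_le_half {t : ℝ} (ht : |t| ≤ 1 / 2) :
    ‖(t : UnitAddCircle)‖ = |t| :=
  (AddCircle.norm_coe_eq_abs_iff 1 one_ne_zero).mpr (by simpa using ht)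

lemma UnitAddCircle.norm_coe_eq_min {t : ℝ} (ht : |t| ≤ 1) :
    ‖(t : UnitAddCircle)‖ = min |t| (1 - |t|) := by
  rcases le_or_gt |t| (1 / 2) with h | h
  · rw [UnitAddCircle.norm_coe_of_abs_le_half h, min_eq_left (by linarith)]
  rw [min_eq_right (by linarith)]
  obtain ⟨ht₁, ht₂⟩ := abs_le.mp ht
  rcases lt_abs.mp h with hpos | hneg
  · have hshift : (t : UnitAddCircle) = ((t - 1 : ℝ) : UnitAddCircle) := by
      rw [← AddCircle.coe_add_period (1 : ℝ) (t - 1), sub_add_cancel]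
    rw [hshift, UnitAddCircle.norm_coe_of_abs_le_half (abs_le.mpr ⟨by linarith, by linarith⟩),
      abs_of_nonpos (by linarith), abs_of_pos (by linarith)]
    ring
  · have hshift : (t : UnitAddCircle) = ((t + 1 : ℝ) : UnitAddCircle) :=
      (AddCircle.coe_add_period (1 : ℝ) t).symm
    rw [hshift, UnitAddCircle.norm_coe_of_abs_le_half (abs_le.mpr ⟨by linarith, by linarith⟩),
      abs_of_nonneg (by linarith), abs_of_neg (by linarith)]
    ring

lemma circDist_eq_dist {a b : ℝ} (h : |a - b| ≤ 1) :
    circDist a b = dist (a : UnitAddCircle) b := by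
  rw [dist_eq_norm, ← AddCircle.coe_sub, UnitAddCircle.norm_coe_eq_min h, circDist]

lemma UnitAddCircle.volume_closedBall_coe_inter_closedBall_zero {c r : ℝ} (hc : |c| ≤ 1 / 2)
    (hr : r ≤ 1 / 4) :
    volume (closedBall (c : UnitAddCircle) r ∩ closedBall 0 r) = ENNReal.ofReal (2 * r - |c|) := by
  set A := Icc (-r) r ∩ Icc (c - r) (c + r) with hAdef
  have hpre : ∀ t : ℝ, t ∈ (↑) ⁻¹' (closedBall (c : UnitAddCircle) r ∩ closedBall 0 r) ↔
      ‖((t - c : ℝ) : UnitAddCircle)‖ ≤ r ∧ ‖(t : UnitAddCircle)‖ ≤ r := by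
    intro t
    simp only [mem_preimage, mem_inter_iff, mem_closedBall, dist_eq_norm, AddCircle.coe_sub,
      sub_zero]
  have hA : volume A = ENNReal.ofReal (2 * r - |c|) := by
    rw [hAdef, Icc_inter_Icc, Real.volume_Icc]
    congr 1
    rcases abs_cases c with ⟨h, _⟩ | ⟨h, _⟩ <;> grind
  have hsub : A ⊆ (↑) ⁻¹' (closedBall (c : UnitAddCircle) r ∩ closedBall 0 r) ∩
      Ioc (-(1 / 2)) (-(1 / 2) + 1) := by
    rintro t ⟨ht, htc⟩
    have htc' : |t - c| ≤ r := abs_sub_le_iff.mpr ⟨by linarith [htc.2], by linarith [htc.1]⟩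
    refine ⟨(hpre t).mpr ⟨?_, ?_⟩, by linarith [ht.1], by linarith [ht.2]⟩
    · rwa [UnitAddCircle.norm_coe_of_abs_le_half (by linarith)]
    · rw [UnitAddCircle.norm_coe_of_abs_le_half
        (abs_le.mpr ⟨by linarith [ht.1], by linarith [ht.2]⟩)]
      exact abs_le.mpr ht
  have hsup : (↑) ⁻¹' (closedBall (c : UnitAddCircle) r ∩ closedBall 0 r) ∩
      Ioc (-(1 / 2)) (-(1 / 2) + 1) ⊆ A ∪ {-r, r} := by
    rintro t ⟨hmem, ht⟩
    obtain ⟨htc, htr⟩ := (hpre t).mp hmem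
    rw [UnitAddCircle.norm_coe_of_abs_le_half
      (abs_le.mpr ⟨by linarith [ht.1], by linarith [ht.2]⟩)] at htr
    have hc' := abs_le.mp hc
    have htr' := abs_le.mp htr
    rw [UnitAddCircle.norm_coe_eq_min (abs_le.mpr ⟨by linarith, by linarith⟩)] at htc
    rcases min_le_iff.mp htc with h | h
    · exact Or.inl ⟨htr', by constructor <;> linarith [abs_le.mp h]⟩
    · -- `1 - |t - c| ≤ r ≤ 1/4` and `|t - c| ≤ |t| + 1/2` force `|t| = r = 1/4`
      have htr_eq : |t| = r := by linarith [abs_sub t c]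
      right
      simp only [mem_insert_iff, mem_singleton_iff]
      rcases abs_cases t with ⟨h', _⟩ | ⟨h', _⟩
      · exact Or.inr (by linarith)
      · exact Or.inl (by linarith)
  rw [AddCircle.add_projection_respects_measure 1 (-(1 / 2))
    (measurableSet_closedBall.inter measurableSet_closedBall)]
  refine le_antisymm ?_ (hA ▸ measure_mono hsub)
  calc _ ≤ volume (A ∪ {-r, r}) := measure_mono hsup
    _ ≤ volume A + volume ({-r, r} : Set ℝ) := measure_union_le _ _
    _ = _ := by rw [(Set.toFinite ({-r, r} : Set ℝ)).measure_zero volume, add_zero, hA]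

lemma circDist_le_half (a b : ℝ) : circDist a b ≤ 1 / 2 := by
  unfold circDist
  rcases le_total |a - b| (1 / 2) with h | h
  exacts [(min_le_left _ _).trans h, (min_le_right _ _).trans (by linarith)]

lemma circDist_self (a : ℝ) : circDist a a = 0 := by simp [circDist]

lemma UnitAddCircle.volume_closedBall_inter_closedBall (a b : UnitAddCircle) {r : ℝ}
    (hr : r ≤ 1 / 4) :
    volume (closedBall a r ∩ closedBall b r) = ENNReal.ofReal (2 * r - dist a b) := by
  obtain ⟨u, hu⟩ := QuotientAddGroup.mk_surjective (a - b)
  have hcoe : ((u - round u : ℝ) : UnitAddCircle) = a - b := by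
    rw [AddCircle.coe_sub, ← hu,
      (AddCircle.coe_eq_zero_iff (x := ((round u : ℤ) : ℝ)) 1).mpr ⟨round u, by simp⟩, sub_zero]
  have hdist : |u - round u| = dist a b := by
    rw [dist_eq_norm, ← hu, UnitAddCircle.norm_eq]
  rw [← measure_preimage_add volume b, preimage_inter, preimage_add_closedBall,
    preimage_add_closedBall, sub_self, ← hcoe,
    volume_closedBall_coe_inter_closedBall_zero (by simpa using abs_sub_round u) hr, hdist]

lemma volume_circDist_le_inter {x x' r : ℝ} (hx : x ∈ Icc (0 : ℝ) 1) (hx' : x' ∈ Icc (0 : ℝ) 1)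
    (hr : r ≤ 1 / 4) :
    volume {s | s ∈ Ico (0 : ℝ) 1 ∧ circDist s x ≤ r ∧ circDist s x' ≤ r} =
      ENNReal.ofReal (2 * r - circDist x x') := by
  have habs : ∀ {a b : ℝ}, a ∈ Icc (0 : ℝ) 1 → b ∈ Icc (0 : ℝ) 1 → |a - b| ≤ 1 := fun ha hb =>
    abs_sub_le_iff.mpr ⟨by linarith [ha.2, hb.1], by linarith [ha.1, hb.2]⟩
  have hset : {s | s ∈ Ico (0 : ℝ) 1 ∧ circDist s x ≤ r ∧ circDist s x' ≤ r} =
      (↑) ⁻¹' (closedBall (x : UnitAddCircle) r ∩ closedBall (x' : UnitAddCircle) r) ∩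
        Ico 0 1 := by
    ext s
    simp only [mem_ofPred_eq, mem_inter_iff, mem_preimage, mem_closedBall]
    refine (and_congr_right fun hs => ?_).trans and_comm
    rw [circDist_eq_dist (habs (Ico_subset_Icc_self hs) hx),
      circDist_eq_dist (habs (Ico_subset_Icc_self hs) hx')]
  have hproj := AddCircle.add_projection_respects_measure (1 : ℝ) 0
    (measurableSet_closedBall.inter measurableSet_closedBall :
      MeasurableSet (closedBall (x : UnitAddCircle) r ∩ closedBall (x' : UnitAddCircle) r))
  rw [zero_add] at hproj
  rw [hset, measure_congr ((ae_eq_refl _).inter Ico_ae_eq_Ioc), ← hproj,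
    UnitAddCircle.volume_closedBall_inter_closedBall _ _ hr, circDist_eq_dist (habs hx hx')]

lemma coneF_eq_min (y : ℝ) : coneF y = min y (1 / 2) := by
  unfold coneF
  split_ifs with h
  · exact (min_eq_left h.le).symm
  · exact (min_eq_right (not_lt.mp h)).symm

lemma continuous_coneF : Continuous coneF := by
  rw [show coneF = fun y => min y (1 / 2) from funext coneF_eq_min]
  fun_prop

lemma integral_Ioi_one_div_sq {c : ℝ} (hc : 0 < c) :
    IntegrableOn (fun y : ℝ => 1 / y ^ 2) (Ioi c) ∧ ∫ y in Ioi c, 1 / y ^ 2 = 1 / c := by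
  have hderiv : ∀ y ∈ Ici c, HasDerivAt (fun z : ℝ => -z⁻¹) (1 / y ^ 2) y := fun y hy => by
    have h := (hasDerivAt_inv (hc.trans_le hy).ne').neg
    rwa [neg_neg, ← one_div] at h
  have hpos : ∀ y ∈ Ioi c, 0 ≤ 1 / y ^ 2 := fun y _ => by positivity
  have hlim : Tendsto (fun z : ℝ => -z⁻¹) atTop (𝓝 0) := by
    simpa using (tendsto_inv_atTop_zero (𝕜 := ℝ)).neg
  refine ⟨integrableOn_Ioi_deriv_of_nonneg' hderiv hpos hlim, ?_⟩
  rw [integral_Ioi_of_hasDerivAt_of_nonneg' hderiv hpos hlim]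
  simp [one_div]

lemma integral_Ici_max_coneF_sub_div_sq {ε d : ℝ} (hε : 0 < ε) (hε2 : ε ≤ 1 / 2) (hd : d ≤ 1 / 2) :
    IntegrableOn (fun y => max (coneF y - d) 0 / y ^ 2) (Ici ε) ∧
      ∫ y in Ici ε, max (coneF y - d) 0 / y ^ 2 = 1 - d / max ε d - Real.log (2 * max ε d) := by
  set g : ℝ → ℝ := fun y => max (coneF y - d) 0 / y ^ 2 with hg
  set m := max ε d
  have hεm : ε ≤ m := le_max_left _ _
  have hm0 : 0 < m := hε.trans_le hεm
  have hm : m ≤ 1 / 2 := max_le hε2 hd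
  have hlow : ∀ y ∈ Ioi ε \ Ioi m, g y = 0 := by
    rintro y ⟨hεy, hym⟩
    have hyd : y ≤ d := ((le_max_iff.mp (not_lt.mp hym)).resolve_left (not_le.mpr hεy))
    have hF : coneF y ≤ d := (coneF_eq_min y ▸ min_le_left y _).trans hyd
    simp only [hg, max_eq_right (sub_nonpos.mpr hF), zero_div]
  have hmid : EqOn g (fun y => y⁻¹ - d * (y ^ 2)⁻¹) (uIcc m (1 / 2)) := by
    intro y hy
    rw [uIcc_of_le hm] at hy
    have hy0 : 0 < y := hm0.trans_le hy.1
    simp only [hg, coneF_eq_min, min_eq_left hy.2,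
      max_eq_left (by linarith [le_max_right ε d, hy.1] : 0 ≤ y - d)]
    field_simp
  have htail : EqOn g (fun y => (1 / 2 - d) * (1 / y ^ 2)) (Ioi (1 / 2)) := by
    intro y hy
    simp only [hg, coneF_eq_min, min_eq_right (mem_Ioi.mp hy).le,
      max_eq_left (by linarith : 0 ≤ 1 / 2 - d)]
    ring
  obtain ⟨hint_tail, hval_tail⟩ := integral_Ioi_one_div_sq (by norm_num : (0 : ℝ) < 1 / 2)
  have hg_int_tail : IntegrableOn g (Ioi (1 / 2)) :=
    (integrableOn_congr_fun htail measurableSet_Ioi).mpr (hint_tail.const_mul _)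
  have hg_int_Icc : IntegrableOn g (Icc ε (1 / 2)) := by
    refine ContinuousOn.integrableOn_Icc (ContinuousOn.div ?_ (continuousOn_pow 2) ?_)
    · exact ((continuous_coneF.sub continuous_const).max continuous_const).continuousOn
    · exact fun y hy => pow_ne_zero _ (hε.trans_le hy.1).ne'
  have hmid_val : ∫ y in m..(1 / 2), g y = 2 * d - d / m - Real.log (2 * m) := by
    have hderiv : ∀ y ∈ uIcc m (1 / 2), HasDerivAt (fun z => Real.log z + d * z⁻¹) (g y) y := by
      intro y hy
      have hy0 : y ≠ 0 := (hm0.trans_le (uIcc_of_le hm ▸ hy).1).ne'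
      have h := (Real.hasDerivAt_log hy0).add ((hasDerivAt_inv hy0).const_mul d)
      refine h.congr_deriv ?_
      rw [hmid hy]
      ring
    have hint : IntervalIntegrable g volume m (1 / 2) := by
      refine IntegrableOn.intervalIntegrable ?_
      rw [uIcc_of_le hm]
      exact hg_int_Icc.mono_set (Icc_subset_Icc_left hεm)
    rw [intervalIntegral.integral_eq_sub_of_hasDerivAt hderiv hint,
      Real.log_mul two_ne_zero hm0.ne', one_div, Real.log_inv]
    ring
  refine ⟨(hg_int_Icc.union hg_int_tail).mono_set ?_, ?_⟩
  · intro y hy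
    rcases le_or_gt y (1 / 2) with h | h
    exacts [Or.inl ⟨hy, h⟩, Or.inr h]
  rw [integral_Ici_eq_integral_Ioi,
    setIntegral_eq_of_subset_of_forall_sdiff_eq_zero measurableSet_Ioi (Ioi_subset_Ioi hεm) hlow,
    ← Ioc_union_Ioi_eq_Ioi hm, setIntegral_union (Ioc_disjoint_Ioi le_rfl) measurableSet_Ioi
      (hg_int_Icc.mono_set (Ioc_subset_Icc_self.trans (Icc_subset_Icc_left hεm))) hg_int_tail,
    ← intervalIntegral.integral_of_le hm, hmid_val, setIntegral_congr_fun measurableSet_Ioi htail,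
    integral_const_mul, hval_tail]
  ring

lemma MeasureTheory.lintegral_restrict_comp_snd {α β : Type*} [MeasurableSpace α]
    [MeasurableSpace β] {μ : Measure α} {ν : Measure β} [SFinite μ] [SFinite ν]
    {S : Set (α × β)} (hS : MeasurableSet S) {f : β → ℝ≥0∞} (hf : Measurable f) :
    ∫⁻ p in S, f p.2 ∂μ.prod ν = ∫⁻ y, f y * μ ((·, y) ⁻¹' S) ∂ν := by
  rw [← lintegral_indicator hS,
    lintegral_prod_symm (S.indicator fun p => f p.2)
      ((hf.comp measurable_snd).indicator hS).aemeasurable]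
  congr 1 with y
  exact lintegral_indicator_const (hS.preimage measurable_prodMk_right) (f y)

lemma measurableSet_coneSet (u x : ℝ) : MeasurableSet (coneSet u x) := by
  have hcircDist : Continuous fun s => circDist s x := by unfold circDist; fun_prop
  exact (measurable_fst measurableSet_Ico).inter ((measurable_snd measurableSet_Ici).inter
    (measurableSet_le (hcircDist.measurable.comp measurable_fst)
      ((continuous_coneF.measurable.comp measurable_snd).div_const 2)))

lemma volume_preimage_prodMk_coneSet_inter {ε x x' : ℝ} (hx : x ∈ Icc (0 : ℝ) 1)
    (hx' : x' ∈ Icc (0 : ℝ) 1) (y : ℝ) :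
    volume ((·, y) ⁻¹' (coneSet ε x ∩ coneSet ε x')) =
      (Ici ε).indicator (fun y => ENNReal.ofReal (coneF y - circDist x x')) y := by
  by_cases hy : ε ≤ y
  · have hslice : (·, y) ⁻¹' (coneSet ε x ∩ coneSet ε x') =
        {s | s ∈ Ico (0 : ℝ) 1 ∧ circDist s x ≤ coneF y / 2 ∧ circDist s x' ≤ coneF y / 2} := by
      ext s
      simp only [coneSet, mem_preimage, mem_inter_iff, mem_ofPred_eq]
      tauto
    have hr : coneF y / 2 ≤ 1 / 4 := by linarith [coneF_eq_min y ▸ min_le_right y (1 / 2)]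
    rw [hslice, volume_circDist_le_inter hx hx' hr, indicator_of_mem (mem_Ici.mpr hy)]
    ring_nf
  · have hslice : (·, y) ⁻¹' (coneSet ε x ∩ coneSet ε x') = ∅ :=
      eq_empty_of_forall_notMem fun s hs => hy hs.1.2.1
    rw [hslice, measure_empty, indicator_of_notMem (by simpa using hy)]

lemma lintegral_coneSet_inter {ε x x' : ℝ} (hx : x ∈ Icc (0 : ℝ) 1) (hx' : x' ∈ Icc (0 : ℝ) 1) :
    ∫⁻ p in coneSet ε x ∩ coneSet ε x', ENNReal.ofReal (1 / p.2 ^ 2) =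
      ∫⁻ y in Ici ε, ENNReal.ofReal (max (coneF y - circDist x x') 0 / y ^ 2) := by
  rw [Measure.volume_eq_prod, lintegral_restrict_comp_snd
    (f := fun y => ENNReal.ofReal (1 / y ^ 2))
    ((measurableSet_coneSet ε x).inter (measurableSet_coneSet ε x')) (by fun_prop),
    ← lintegral_indicator measurableSet_Ici]
  congr 1 with y
  rw [volume_preimage_prodMk_coneSet_inter hx hx']
  by_cases hy : y ∈ Ici ε
  · rw [indicator_of_mem hy, indicator_of_mem hy,
      show ENNReal.ofReal (coneF y - circDist x x') =
        ENNReal.ofReal (max (coneF y - circDist x x') 0) by simp,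
      ← ENNReal.ofReal_mul (by positivity), one_div_mul_eq_div]
  · rw [indicator_of_notMem hy, indicator_of_notMem hy, mul_zero]

lemma integral_coneSet_inter {ε x x' : ℝ} (hε : 0 < ε) (hε2 : ε ≤ 1 / 2)
    (hx : x ∈ Icc (0 : ℝ) 1) (hx' : x' ∈ Icc (0 : ℝ) 1) :
    ∫ p in coneSet ε x ∩ coneSet ε x', 1 / p.2 ^ 2 =
      1 - circDist x x' / max ε (circDist x x') - Real.log (2 * max ε (circDist x x')) := by
  obtain ⟨hint, hval⟩ := integral_Ici_max_coneF_sub_div_sq hε hε2 (circDist_le_half x x')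
  rw [integral_eq_lintegral_of_nonneg_ae (Eventually.of_forall fun p => by positivity)
      (by fun_prop : Measurable fun p : ℝ × ℝ => 1 / p.2 ^ 2).aestronglyMeasurable,
    lintegral_coneSet_inter hx hx',
    ← ofReal_integral_eq_lintegral_ofReal hint (Eventually.of_forall fun y => by positivity),
    ENNReal.toReal_ofReal (setIntegral_nonneg measurableSet_Ici fun y _ => by positivity), hval]

lemma natCast_div_mem_Icc {N : ℕ} (i : Fin N) : (i : ℝ) / N ∈ Icc (0 : ℝ) 1 :=
  ⟨by positivity, div_le_one_of_le₀ (by exact_mod_cast i.is_lt.le) (Nat.cast_nonneg N)⟩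

lemma one_div_le_circDist_natCast_div {N : ℕ} {i j : Fin N} (hij : i ≠ j) :
    1 / (N : ℝ) ≤ circDist ((i : ℝ) / N) ((j : ℝ) / N) := by
  have hN : (0 : ℝ) < N := Nat.cast_pos.mpr i.pos
  have h1 : (1 : ℝ) ≤ |(i : ℝ) - j| := by
    have : (1 : ℤ) ≤ |(i : ℤ) - j| :=
      Int.one_le_abs (sub_ne_zero.mpr (by exact_mod_cast Fin.val_ne_of_ne hij))
    exact_mod_cast this
  have h2 : |(i : ℝ) - j| ≤ N - 1 := by
    have hi : (i : ℝ) + 1 ≤ N := by exact_mod_cast i.is_lt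
    have hj : (j : ℝ) + 1 ≤ N := by exact_mod_cast j.is_lt
    exact abs_sub_le_iff.mpr ⟨by linarith [(j : ℕ).cast_nonneg (α := ℝ)],
      by linarith [(i : ℕ).cast_nonneg (α := ℝ)]⟩
  rw [circDist, div_sub_div_same, abs_div, abs_of_pos hN]
  refine le_min (by gcongr) ?_
  rw [le_sub_iff_add_le, ← add_div, div_le_one hN]
  linarith

theorem stmt3_general {Ω : Type*} [MeasurableSpace Ω] (P : Measure Ω)
    (σ : ℝ) (N : ℕ) (hN : 2 < N)
    (X : ℝ → Ω → ℝ)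
    (hcov : ∀ x x' : ℝ, ∫ ω, X x ω * X x' ω ∂P
      = σ ^ 2 * ∫ p in coneSet (1 / N) x ∩ coneSet (1 / N) x', 1 / p.2 ^ 2) :
    (∀ i : Fin N, ∫ ω, (X ((i : ℝ) / N) ω) ^ 2 ∂P
        = σ ^ 2 * (Real.log N + 1 - Real.log 2)) ∧
    (∀ i j : Fin N, i ≠ j →
      ∫ ω, X ((i : ℝ) / N) ω * X ((j : ℝ) / N) ω ∂P
        = σ ^ 2 * (Real.log (1 / circDist ((i : ℝ) / N) ((j : ℝ) / N)) - Real.log 2)) := by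
  have hε : (0 : ℝ) < 1 / N := by positivity
  have hε2 : (1 : ℝ) / N ≤ 1 / 2 := one_div_le_one_div_of_le two_pos (by exact_mod_cast hN.le)
  refine ⟨fun i => ?_, fun i j hij => ?_⟩
  · simp_rw [sq]
    rw [hcov, integral_coneSet_inter hε hε2 (natCast_div_mem_Icc i) (natCast_div_mem_Icc i),
      circDist_self, max_eq_left hε.le, zero_div, Real.log_mul two_ne_zero hε.ne', one_div,
      Real.log_inv]
    ring
  · have hd := one_div_le_circDist_natCast_div hij
    rw [hcov, integral_coneSet_inter hε hε2 (natCast_div_mem_Icc i) (natCast_div_mem_Icc j),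
      max_eq_right hd, div_self (hε.trans_le hd).ne',
      Real.log_mul two_ne_zero (hε.trans_le hd).ne', one_div (circDist _ _), Real.log_inv]
    ring

/-- Covariance structure of the log-correlated field: if the covariances of the field
`X` are given by the `θ`-measure (`θ(ds,dy) = y⁻² ds dy`) of intersections of cones at
height `ε = 1/N`, then `E[X_x²] = σ²(log N + 1 − log 2)` and, for `x ≠ x'`,
`E[X_x X_{x'}] = σ²(log(1/‖x−x'‖) − log 2)`. -/
theorem stmt3 {Ω : Type*} [MeasurableSpace Ω] (P : Measure Ω) [IsProbabilityMeasure P]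
    (σ : ℝ) (hσ : 0 < σ) (N : ℕ) (hN : 2 < N)
    (X : ℝ → Ω → ℝ)
    (hcov : ∀ x x' : ℝ, ∫ ω, X x ω * X x' ω ∂P
      = σ ^ 2 * ∫ p in coneSet (1 / N) x ∩ coneSet (1 / N) x', 1 / p.2 ^ 2) :
    (∀ i : Fin N, ∫ ω, (X ((i : ℝ) / N) ω) ^ 2 ∂P
        = σ ^ 2 * (Real.log N + 1 - Real.log 2)) ∧
    (∀ i j : Fin N, i ≠ j →
      ∫ ω, X ((i : ℝ) / N) ω * X ((j : ℝ) / N) ω ∂P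
        = σ ^ 2 * (Real.log (1 / circDist ((i : ℝ) / N) ((j : ℝ) / N)) - Real.log 2)) :=
  stmt3_general P σ N hN X hcov
end

section
/- Let (x_N) be a sequence of nondecreasing right-continuous functions from [0,1] to [0,1] with x_N(1) = 1, and suppose that for every α ∈ (0,1), ∫_α^1 x_N(s) ds → c(1−α) for a constant c ∈ (0,1). Then every weak subsequential limit x of (x_N) satisfies x(q) = c for all q ∈ (0,1). -/
open Filter Topology MeasureTheory

/-- Identification of weak subsequential limits of the overlap distribution functions:
if `x_N : [0,1] → [0,1]` are nondecreasing right-continuous with `x_N(1) = 1` and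
`∫_α^1 x_N(s) ds → c(1−α)` for every `α ∈ (0,1)`, then every weak subsequential limit `x`
(convergence at continuity points, along a subsequence) satisfies `x(q) = c` on `(0,1)`. -/
theorem stmt10 (c : ℝ) (hc : c ∈ Set.Ioo (0 : ℝ) 1)
    (xN : ℕ → ℝ → ℝ)
    (hmono : ∀ n, MonotoneOn (xN n) (Set.Icc 0 1))
    (hrange : ∀ n, ∀ q ∈ Set.Icc (0 : ℝ) 1, xN n q ∈ Set.Icc (0 : ℝ) 1)
    (hrc : ∀ n, ∀ q ∈ Set.Ico (0 : ℝ) 1, ContinuousWithinAt (xN n) (Set.Ici q) q)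
    (hone : ∀ n, xN n 1 = 1)
    (hint : ∀ α ∈ Set.Ioo (0 : ℝ) 1,
      Tendsto (fun n => ∫ s in α..1, xN n s) atTop (𝓝 (c * (1 - α))))
    (φ : ℕ → ℕ) (hφ : StrictMono φ)
    (x : ℝ → ℝ) (hxmono : MonotoneOn x (Set.Icc 0 1))
    (hxrange : ∀ q ∈ Set.Icc (0 : ℝ) 1, x q ∈ Set.Icc (0 : ℝ) 1)
    (hxrc : ∀ q ∈ Set.Ioo (0 : ℝ) 1, ContinuousWithinAt x (Set.Ici q) q)
    (hweak : ∀ q ∈ Set.Ioo (0 : ℝ) 1, ContinuousAt x q →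
      Tendsto (fun n => xN (φ n) q) atTop (𝓝 (x q))) :
    ∀ q ∈ Set.Ioo (0 : ℝ) 1, x q = c := by
  -- integrability of each `xN n` on subintervals of `[0,1]`
  have hInt : ∀ n, ∀ a b : ℝ, a ∈ Set.Icc (0:ℝ) 1 → b ∈ Set.Icc (0:ℝ) 1 →
      IntervalIntegrable (xN n) volume a b := fun n a b ha hb =>
    ((hmono n).mono (Set.uIcc_subset_Icc ha hb)).intervalIntegrable
  -- convergence of the middle integrals along the subsequence
  have hmid : ∀ a b : ℝ, a ∈ Set.Ioo (0:ℝ) 1 → b ∈ Set.Ioo (0:ℝ) 1 →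
      Tendsto (fun n => ∫ s in a..b, xN (φ n) s) atTop (𝓝 (c * (b - a))) := by
    intro a b ha hb
    have habI : a ∈ Set.Icc (0:ℝ) 1 := Set.mem_Icc_of_Ioo ha
    have hbbI : b ∈ Set.Icc (0:ℝ) 1 := Set.mem_Icc_of_Ioo hb
    have h1 : Tendsto (fun n => (∫ s in a..1, xN n s) - ∫ s in b..1, xN n s)
        atTop (𝓝 (c * (1 - a) - c * (1 - b))) := (hint a ha).sub (hint b hb)
    have heq : ∀ n, (∫ s in a..1, xN n s) - (∫ s in b..1, xN n s) = ∫ s in a..b, xN n s := by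
      intro n
      have := intervalIntegral.integral_add_adjacent_intervals
        (hInt n a b habI hbbI) (hInt n b 1 hbbI (by norm_num))
      linarith [this]
    have h2 : Tendsto (fun n => ∫ s in a..b, xN n s) atTop (𝓝 (c * (b - a))) := by
      have : c * (1 - a) - c * (1 - b) = c * (b - a) := by ring
      rw [← this]
      exact h1.congr heq
    exact h2.comp hφ.tendsto_atTop
  -- at every continuity point `a ∈ (0,1)`, we have `x a ≤ c`
  have hle : ∀ a ∈ Set.Ioo (0:ℝ) 1, ContinuousAt x a → x a ≤ c := by
    intro a ha hca
    set b : ℝ := (a + 1) / 2 with hbdef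
    have hab : a < b := by rw [hbdef]; linarith [ha.2]
    have hb : b ∈ Set.Ioo (0:ℝ) 1 := ⟨by rw [hbdef]; linarith [ha.1], by rw [hbdef]; linarith [ha.2]⟩
    have hlow : ∀ n, xN n a * (b - a) ≤ ∫ s in a..b, xN n s := by
      intro n
      have : ∫ s in a..b, xN n a = (b - a) * xN n a := by
        simp [intervalIntegral.integral_const, smul_eq_mul]
      rw [mul_comm, ← this]
      refine intervalIntegral.integral_mono_on hab.le intervalIntegrable_const
        (hInt n a b (Set.mem_Icc_of_Ioo ha) (Set.mem_Icc_of_Ioo hb)) ?_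
      intro t ht
      exact hmono n (Set.mem_Icc_of_Ioo ha) ⟨le_trans ha.1.le ht.1, le_trans ht.2 hb.2.le⟩ ht.1
    have hL : Tendsto (fun n => xN (φ n) a * (b - a)) atTop (𝓝 (x a * (b - a))) :=
      (hweak a ha hca).mul_const _
    have hxa : x a * (b - a) ≤ c * (b - a) :=
      le_of_tendsto_of_tendsto' hL (hmid a b ha hb) fun n => hlow (φ n)
    exact le_of_mul_le_mul_right hxa (by linarith)
  -- at every continuity point `b ∈ (0,1)`, we have `c ≤ x b`
  have hge : ∀ b ∈ Set.Ioo (0:ℝ) 1, ContinuousAt x b → c ≤ x b := by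
    intro b hb hcb
    set a : ℝ := b / 2 with hadef
    have hab : a < b := by rw [hadef]; linarith [hb.1]
    have ha : a ∈ Set.Ioo (0:ℝ) 1 := ⟨by rw [hadef]; linarith [hb.1], by rw [hadef]; linarith [hb.2]⟩
    have hupp : ∀ n, (∫ s in a..b, xN n s) ≤ xN n b * (b - a) := by
      intro n
      have : ∫ s in a..b, xN n b = (b - a) * xN n b := by
        simp [intervalIntegral.integral_const, smul_eq_mul]
      rw [mul_comm (xN n b), ← this]
      refine intervalIntegral.integral_mono_on hab.le
        (hInt n a b (Set.mem_Icc_of_Ioo ha) (Set.mem_Icc_of_Ioo hb)) intervalIntegrable_const ?_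
      intro t ht
      exact hmono n ⟨le_trans ha.1.le ht.1, le_trans ht.2 hb.2.le⟩ (Set.mem_Icc_of_Ioo hb) ht.2
    have hL : Tendsto (fun n => xN (φ n) b * (b - a)) atTop (𝓝 (x b * (b - a))) :=
      (hweak b hb hcb).mul_const _
    have hxb : c * (b - a) ≤ x b * (b - a) :=
      le_of_tendsto_of_tendsto' (hmid a b ha hb) hL fun n => hupp (φ n)
    exact le_of_mul_le_mul_right hxb (by linarith)
  -- continuity points of `x` are dense in `(0,1)`
  set y : ℝ → ℝ := fun t => x (min 1 (max 0 t)) with hydef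
  have hclamp : ∀ t : ℝ, min 1 (max 0 t) ∈ Set.Icc (0:ℝ) 1 :=
    fun t => ⟨le_min zero_le_one (le_max_left 0 t), min_le_left _ _⟩
  have hymono : Monotone y := by
    intro s t hst
    exact hxmono (hclamp s) (hclamp t) (min_le_min le_rfl (max_le_max le_rfl hst))
  have hyx : ∀ t ∈ Set.Ioo (0:ℝ) 1, ContinuousAt y t → ContinuousAt x t := by
    intro t ht hyt
    have heq : y =ᶠ[𝓝 t] x := by
      filter_upwards [isOpen_Ioo.mem_nhds ht] with s hs
      simp [hydef, max_eq_right hs.1.le, min_eq_right hs.2.le]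
    exact (continuousAt_congr heq).mp hyt
  have hdense : ∀ a b : ℝ, a < b → Set.Ioo a b ⊆ Set.Ioo (0:ℝ) 1 →
      ∃ t ∈ Set.Ioo a b, ContinuousAt x t := by
    intro a b hab hsub
    by_contra h
    push_neg at h
    have hsub2 : Set.Ioo a b ⊆ {t | ¬ContinuousAt y t} := by
      intro t ht hyt
      exact h t ht (hyx t (hsub ht) hyt)
    have hcnt : (Set.Ioo a b).Countable := hymono.countable_not_continuousAt.mono hsub2
    have := hcnt.measure_zero volume
    rw [Real.volume_Ioo] at this
    exact absurd this (by simp [ENNReal.ofReal_eq_zero]; linarith)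
  intro q hq
  -- upper bound: pick a continuity point in `(q, 1)`
  have hub : x q ≤ c := by
    obtain ⟨t, ht, hct⟩ := hdense q 1 hq.2 (fun s hs => ⟨lt_trans hq.1 hs.1, hs.2⟩)
    have htI : t ∈ Set.Ioo (0:ℝ) 1 := ⟨lt_trans hq.1 ht.1, ht.2⟩
    exact le_trans (hxmono (Set.mem_Icc_of_Ioo hq) (Set.mem_Icc_of_Ioo htI) ht.1.le) (hle t htI hct)
  -- lower bound: approach `q` from the right along continuity points
  have hlb : c ≤ x q := by
    have hexists : ∀ k : ℕ, ∃ t, t ∈ Set.Ioo q (min 1 (q + 1 / (k + 1))) ∧ ContinuousAt x t := by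
      intro k
      have hpos : (0:ℝ) < 1 / ((k:ℝ) + 1) := by positivity
      have hlt : q < min 1 (q + 1 / (k + 1)) := lt_min hq.2 (by linarith)
      obtain ⟨t, ht, hct⟩ := hdense q (min 1 (q + 1 / (k + 1))) hlt
        (fun s hs => ⟨lt_trans hq.1 hs.1, lt_of_lt_of_le hs.2 (min_le_left _ _)⟩)
      exact ⟨t, ht, hct⟩
    choose t ht hct using hexists
    have htI : ∀ k, t k ∈ Set.Ioo (0:ℝ) 1 :=
      fun k => ⟨lt_trans hq.1 (ht k).1, lt_of_lt_of_le (ht k).2 (min_le_left _ _)⟩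
    have htq : Tendsto t atTop (𝓝 q) := by
      have hupper : Tendsto (fun k : ℕ => q + 1 / ((k:ℝ) + 1)) atTop (𝓝 q) := by
        have := tendsto_one_div_add_atTop_nhds_zero_nat (𝕜 := ℝ)
        have h2 := (tendsto_const_nhds (x := q) (f := atTop (α := ℕ))).add this
        simpa using h2
      refine tendsto_of_tendsto_of_tendsto_of_le_of_le tendsto_const_nhds hupper
        (fun k => (ht k).1.le) (fun k => ?_)
      exact le_trans (ht k).2.le (min_le_right _ _)
    have htqw : Tendsto t atTop (𝓝[Set.Ici q] q) :=
      tendsto_nhdsWithin_of_tendsto_nhds_of_eventually_within t htq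
        (Eventually.of_forall fun k => (ht k).1.le)
    have hxt : Tendsto (fun k => x (t k)) atTop (𝓝 (x q)) := (hxrc q hq).tendsto.comp htqw
    exact ge_of_tendsto hxt (Eventually.of_forall fun k => hge (t k) (htI k) (hct k))
  linarith
end
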